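/- Let k be a field, H a ℤ-graded bialgebra over k with counit ε, and A a ℤ-graded k-algebra. Let ρ : A → A⊗H be a k-linear map such that (id_A⊗ε)∘ρ = id_A and ρ(A_n) ⊆ A_n⊗H_n for all n ∈ ℤ. Suppose f_i : H → H and τ_i : A → A (i ∈ ℤ) are k-linear maps with (id_A⊗f_i)∘ρ = ρ∘τ_i for all i, and let σ : H × H → k be the bilinear map determined by σ(x, y) = ε(x)·ε(f_n(y)) for all n ∈ ℤ, homogeneous x ∈ H_n, and y ∈ H. Then for every n ∈ ℤ, homogeneous a ∈ A_n, and b ∈ A, writing ρ(a) = Σ a_0⊗a_1 and ρ(b) = Σ b_0⊗b_1: Σ a_0·b_0·σ(a_1, b_1) = a·τ_n(b). -/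

import Mathlib

/-!
The left side is the pairing of `ρ a` with `ρ b` under
`(a₀ ⊗ a₁, b₀ ⊗ b₁) ↦ σ(a₁, b₁) a₀ b₀`. As `ρ a` lies in `A_n ⊗ H_n`, only the values of `σ` on
`H_n × H` matter, so `σ` may be replaced by `(x, y) ↦ ε(x) ε(f_n y)`. For that form the pairing
factors as `(id ⊗ ε)(ρ a) · (id ⊗ ε)((id ⊗ f_n)(ρ b))`, which is `a · τ_n b` by the counit and
compatibility hypotheses.
-/

open TensorProduct

section TwistedMul

variable {R A H : Type*} [CommSemiring R] [Semiring A] [Algebra R A]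
  [AddCommMonoid H] [Module R H]

variable (R A) in
noncomputable def twistedMul (σ : H →ₗ[R] H →ₗ[R] R) : A ⊗[R] H →ₗ[R] A ⊗[R] H →ₗ[R] A :=
  TensorProduct.curry <|
    (TensorProduct.rid R A).toLinearMap ∘ₗ
      TensorProduct.map (LinearMap.mul' R A) (TensorProduct.lift σ) ∘ₗ
      (TensorProduct.tensorTensorTensorComm R A H A H).toLinearMap

@[simp]
theorem twistedMul_tmul_tmul (σ : H →ₗ[R] H →ₗ[R] R) (a₀ b₀ : A) (a₁ b₁ : H) :
    twistedMul R A σ (a₀ ⊗ₜ a₁) (b₀ ⊗ₜ b₁) = σ a₁ b₁ • (a₀ * b₀) := by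
  simp [twistedMul]

theorem twistedMul_sum_tmul_sum (σ : H →ₗ[R] H →ₗ[R] R) {ι κ : Type*} (s : Finset ι)
    (t : Finset κ) (a₀ : ι → A) (a₁ : ι → H) (b₀ : κ → A) (b₁ : κ → H) :
    twistedMul R A σ (∑ i ∈ s, a₀ i ⊗ₜ a₁ i) (∑ j ∈ t, b₀ j ⊗ₜ b₁ j) =
      ∑ i ∈ s, ∑ j ∈ t, σ (a₁ i) (b₁ j) • (a₀ i * b₀ j) := by
  simp only [map_sum, LinearMap.sum_apply, twistedMul_tmul_tmul]
  exact Finset.sum_comm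

theorem twistedMul_eq_of_eqOn {σ σ' : H →ₗ[R] H →ₗ[R] R} (N : Submodule R A)
    (M : Submodule R H) (hσ : ∀ x ∈ M, ∀ y, σ x y = σ' x y) {u : A ⊗[R] H}
    (hu : u ∈ LinearMap.range (TensorProduct.map N.subtype M.subtype)) (v : A ⊗[R] H) :
    twistedMul R A σ u v = twistedMul R A σ' u v := by
  obtain ⟨z, rfl⟩ := hu
  suffices twistedMul R A σ ∘ₗ TensorProduct.map N.subtype M.subtype =
      twistedMul R A σ' ∘ₗ TensorProduct.map N.subtype M.subtype from
    LinearMap.congr_fun (LinearMap.congr_fun this z) v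
  refine TensorProduct.ext' fun a x => TensorProduct.ext' fun b y => ?_
  simp [hσ x x.2 y]

end TwistedMul

section CounitForm

variable {R H : Type*} [CommSemiring R] [AddCommMonoid H] [Module R H] [CoalgebraStruct R H]

variable (R) in
noncomputable def counitForm (g : H →ₗ[R] H) : H →ₗ[R] H →ₗ[R] R :=
  (LinearMap.mul R R).compl₁₂ Coalgebra.counit (Coalgebra.counit ∘ₗ g)

@[simp]
theorem counitForm_apply (g : H →ₗ[R] H) (x y : H) :
    counitForm R g x y = Coalgebra.counit x * Coalgebra.counit (g y) :=
  rfl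

variable {A : Type*} [Semiring A] [Algebra R A]

variable (R A) in
noncomputable def counitEval : A ⊗[R] H →ₗ[R] A :=
  (TensorProduct.rid R A).toLinearMap ∘ₗ LinearMap.lTensor A Coalgebra.counit

theorem twistedMul_counitForm (g : H →ₗ[R] H) (u v : A ⊗[R] H) :
    twistedMul R A (counitForm R g) u v =
      counitEval R A u * counitEval R A (LinearMap.lTensor A g v) := by
  suffices twistedMul R A (counitForm R g) =
      (LinearMap.mul R A).compl₁₂ (counitEval R A) (counitEval R A ∘ₗ LinearMap.lTensor A g)
    from LinearMap.congr_fun (LinearMap.congr_fun this u) v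
  refine TensorProduct.ext' fun a x => TensorProduct.ext' fun b y => ?_
  simp [counitEval, mul_comm (Coalgebra.counit x), mul_smul]

end CounitForm

theorem statement14 {k H A : Type*} [Field k] [Ring H] [Bialgebra k H]
    [Ring A] [Algebra k A]
    (ℋ : ℤ → Submodule k H)
    (𝒜 : ℤ → Submodule k A)
    (ρ : A →ₗ[k] A ⊗[k] H)
    (hcounit : ∀ a : A,
      (TensorProduct.rid k A) ((TensorProduct.map LinearMap.id Coalgebra.counit) (ρ a)) = a)
    (hgr : ∀ n : ℤ, ∀ a ∈ 𝒜 n,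
      ρ a ∈ LinearMap.range (TensorProduct.map (𝒜 n).subtype (ℋ n).subtype))
    (f : ℤ → (H →ₗ[k] H)) (τ : ℤ → (A →ₗ[k] A))
    (hcompat : ∀ (i : ℤ) (a : A),
      (TensorProduct.map LinearMap.id (f i)) (ρ a) = ρ (τ i a))
    (σ : H →ₗ[k] H →ₗ[k] k)
    (hσ : ∀ n : ℤ, ∀ x ∈ ℋ n, ∀ y : H,
      σ x y = Coalgebra.counit (R := k) x * Coalgebra.counit (R := k) (f n y)) :
    ∀ n : ℤ, ∀ a ∈ 𝒜 n, ∀ b : A,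
    ∀ (ιa ιb : Type) (sa : Finset ιa) (sb : Finset ιb)
      (a0 : ιa → A) (a1 : ιa → H) (b0 : ιb → A) (b1 : ιb → H),
      ρ a = ∑ i ∈ sa, a0 i ⊗ₜ[k] a1 i →
      ρ b = ∑ j ∈ sb, b0 j ⊗ₜ[k] b1 j →
      ∑ i ∈ sa, ∑ j ∈ sb, σ (a1 i) (b1 j) • (a0 i * b0 j) = a * τ n b := by
  intro n a ha b ιa ιb sa sb a0 a1 b0 b1 hρa hρb
  have hεa : counitEval k A (ρ a) = a := hcounit a
  have hεb : counitEval k A (LinearMap.lTensor A (f n) (ρ b)) = τ n b := by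
    rw [LinearMap.lTensor, hcompat]
    exact hcounit (τ n b)
  rw [← twistedMul_sum_tmul_sum, ← hρa, ← hρb,
    twistedMul_eq_of_eqOn (𝒜 n) (ℋ n) (σ' := counitForm k (f n)) (hσ n) (hgr n a ha),
    twistedMul_counitForm, hεa, hεb]
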